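/- arXiv:2403.02692 — 2 statements merged into one kernel-verified Lean document; each statement's English description precedes it below -/
import Mathlib

section
/- Let D_r be an m×n binary real-user interaction matrix with D_r[u,i]=0 for a target user u and target item i, let N_u = {j : D_r[u,j]=1}, and let D_f be a p×n binary fake-user matrix in which every fake user likes item i (D_f[f,i]=1 for all f). Then the increase of the three-order path number due to the fake users satisfies ((A')³)_{u,i} − (A³)_{u,i} = Σ_{f=1}^{p} |{j : D_r[u,j]=1 and D_f[f,j]=1}| ≤ p·|N_u|, with equality iff every fake user likes all items in N_u. In particular, constructing each of the p fake users to like exactly the items N_u ∪ {i} attains the maximal achievable three-order path number ((A')³)_{u,i} = (A³)_{u,i} + p·|N_u| among all choices of p fake users that like item i. -/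
open Matrix

lemma cube_entry {α β : Type*} [Fintype α] [Fintype β] [DecidableEq α] [DecidableEq β]
    (M : Matrix α β ℕ) (u : α) (i : β) :
    (fromBlocks 0 M Mᵀ 0 ^ 3) (Sum.inl u) (Sum.inr i) = (M * Mᵀ * M) u i := by
  rw [pow_succ, pow_two]
  simp [Matrix.fromBlocks_multiply]

lemma entry_sum {α β : Type*} [Fintype α] [Fintype β] (M : Matrix α β ℕ) (u : α) (i : β) :
    (M * Mᵀ * M) u i = ∑ v : α, ∑ k : β, M u k * M v k * M v i := by
  simp [Matrix.mul_apply, Finset.sum_mul, Matrix.transpose_apply]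

lemma main_entry {m p n : ℕ} (Dr : Matrix (Fin m) (Fin n) ℕ) (Df : Matrix (Fin p) (Fin n) ℕ)
    (u : Fin m) (i : Fin n) :
    (fromBlocks 0 (fromRows Dr Df) (fromRows Dr Df)ᵀ 0 ^ 3) (Sum.inl (Sum.inl u)) (Sum.inr i)
      = (fromBlocks 0 Dr Drᵀ 0 ^ 3) (Sum.inl u) (Sum.inr i)
        + ∑ f : Fin p, ∑ k : Fin n, Dr u k * Df f k * Df f i := by
  rw [cube_entry, cube_entry, entry_sum, entry_sum, Fintype.sum_sum_type]
  simp

lemma row_card {n : ℕ} (a b : Fin n → ℕ) (ha : ∀ j, a j = 0 ∨ a j = 1)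
    (hb : ∀ j, b j = 0 ∨ b j = 1) :
    ∑ k : Fin n, a k * b k = (Finset.univ.filter (fun j : Fin n => a j = 1 ∧ b j = 1)).card := by
  rw [Finset.card_filter]
  apply Finset.sum_congr rfl
  intro k _
  rcases ha k with h1 | h1 <;> rcases hb k with h2 | h2 <;> simp [h1, h2]

lemma main_entry' {m p n : ℕ} (Dr : Matrix (Fin m) (Fin n) ℕ) (Df : Matrix (Fin p) (Fin n) ℕ)
    (hDr : ∀ u' j, Dr u' j = 0 ∨ Dr u' j = 1) (hDf : ∀ f j, Df f j = 0 ∨ Df f j = 1)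
    (u : Fin m) (i : Fin n) (hlike : ∀ f, Df f i = 1) :
    (fromBlocks 0 (fromRows Dr Df) (fromRows Dr Df)ᵀ 0 ^ 3) (Sum.inl (Sum.inl u)) (Sum.inr i)
      = (fromBlocks 0 Dr Drᵀ 0 ^ 3) (Sum.inl u) (Sum.inr i)
        + ∑ f : Fin p,
            (Finset.univ.filter (fun j : Fin n => Dr u j = 1 ∧ Df f j = 1)).card := by
  rw [main_entry]
  congr 1
  apply Finset.sum_congr rfl
  intro f _
  simp only [hlike f, mul_one]
  exact row_card _ _ (fun j => hDr u j) (fun j => hDf f j)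

theorem stmt_7 {m p n : ℕ}
    (Dr : Matrix (Fin m) (Fin n) ℕ) (Df : Matrix (Fin p) (Fin n) ℕ)
    (hDr : ∀ u' j, Dr u' j = 0 ∨ Dr u' j = 1)
    (hDf : ∀ f j, Df f j = 0 ∨ Df f j = 1)
    (u : Fin m) (i : Fin n) (hui : Dr u i = 0)
    (Nu : Finset (Fin n)) (hNu : Nu = Finset.univ.filter (fun j : Fin n => Dr u j = 1))
    (hlike : ∀ f : Fin p, Df f i = 1)
    (A : Matrix (Fin m ⊕ Fin n) (Fin m ⊕ Fin n) ℕ)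
    (hA : A = Matrix.fromBlocks 0 Dr Drᵀ 0)
    (A' : Matrix ((Fin m ⊕ Fin p) ⊕ Fin n) ((Fin m ⊕ Fin p) ⊕ Fin n) ℕ)
    (hA' : A' = Matrix.fromBlocks 0 (Matrix.fromRows Dr Df) (Matrix.fromRows Dr Df)ᵀ 0) :
    -- the increase of the three-order path number due to the fake users
    (A' ^ 3) (Sum.inl (Sum.inl u)) (Sum.inr i) =
        (A ^ 3) (Sum.inl u) (Sum.inr i) +
          ∑ f : Fin p,
            (Finset.univ.filter (fun j : Fin n => Dr u j = 1 ∧ Df f j = 1)).card ∧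
    -- the increase is at most p * |N_u| ...
    (∑ f : Fin p,
        (Finset.univ.filter (fun j : Fin n => Dr u j = 1 ∧ Df f j = 1)).card) ≤
      p * Nu.card ∧
    -- ... with equality iff every fake user likes all items in N_u
    ((∑ f : Fin p,
        (Finset.univ.filter (fun j : Fin n => Dr u j = 1 ∧ Df f j = 1)).card) =
        p * Nu.card ↔ ∀ (f : Fin p), ∀ j ∈ Nu, Df f j = 1) ∧
    -- making each fake user like exactly the items N_u ∪ {i} attains the maximum
    (∀ Df' : Matrix (Fin p) (Fin n) ℕ,
      (∀ f j, Df' f j = if Dr u j = 1 ∨ j = i then 1 else 0) →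
        ((Matrix.fromBlocks 0 (Matrix.fromRows Dr Df') (Matrix.fromRows Dr Df')ᵀ 0 ^ 3)
            (Sum.inl (Sum.inl u)) (Sum.inr i) =
          (A ^ 3) (Sum.inl u) (Sum.inr i) + p * Nu.card ∧
        ∀ Df2 : Matrix (Fin p) (Fin n) ℕ,
          (∀ f j, Df2 f j = 0 ∨ Df2 f j = 1) → (∀ f, Df2 f i = 1) →
            (Matrix.fromBlocks 0 (Matrix.fromRows Dr Df2) (Matrix.fromRows Dr Df2)ᵀ 0 ^ 3)
                (Sum.inl (Sum.inl u)) (Sum.inr i) ≤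
              (Matrix.fromBlocks 0 (Matrix.fromRows Dr Df') (Matrix.fromRows Dr Df')ᵀ 0 ^ 3)
                (Sum.inl (Sum.inl u)) (Sum.inr i))) := by
  subst hA hA' hNu
  -- per-f card bound, for arbitrary 0/1 matrices
  have hcard : ∀ (B : Matrix (Fin p) (Fin n) ℕ) (f : Fin p),
      (Finset.univ.filter (fun j : Fin n => Dr u j = 1 ∧ B f j = 1)).card ≤
        (Finset.univ.filter (fun j : Fin n => Dr u j = 1)).card := by
    intro B f
    exact Finset.card_le_card (fun j hj => by
      simp only [Finset.mem_filter] at hj ⊢; exact ⟨hj.1, hj.2.1⟩)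
  have hbound : ∀ (B : Matrix (Fin p) (Fin n) ℕ),
      (∑ f : Fin p,
          (Finset.univ.filter (fun j : Fin n => Dr u j = 1 ∧ B f j = 1)).card) ≤
        p * (Finset.univ.filter (fun j : Fin n => Dr u j = 1)).card := by
    intro B
    calc (∑ f : Fin p, (Finset.univ.filter (fun j : Fin n => Dr u j = 1 ∧ B f j = 1)).card)
        ≤ ∑ _f : Fin p, (Finset.univ.filter (fun j : Fin n => Dr u j = 1)).card :=
          Finset.sum_le_sum (fun f _ => hcard B f)
      _ = p * (Finset.univ.filter (fun j : Fin n => Dr u j = 1)).card := by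
          simp [Finset.sum_const, mul_comm]
  refine ⟨main_entry' Dr Df hDr hDf u i hlike, hbound Df, ?_, ?_⟩
  · constructor
    · intro heq f j hj
      -- all terms must be equal to the bound
      have hall : ∀ g : Fin p,
          (Finset.univ.filter (fun j : Fin n => Dr u j = 1 ∧ Df g j = 1)).card =
            (Finset.univ.filter (fun j : Fin n => Dr u j = 1)).card := by
        by_contra hc
        push_neg at hc
        obtain ⟨g, hg⟩ := hc
        have hlt : (Finset.univ.filter (fun j : Fin n => Dr u j = 1 ∧ Df g j = 1)).card <
            (Finset.univ.filter (fun j : Fin n => Dr u j = 1)).card :=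
          lt_of_le_of_ne (hcard Df g) hg
        have := Finset.sum_lt_sum (fun f (_ : f ∈ Finset.univ) => hcard Df f)
          ⟨g, Finset.mem_univ g, hlt⟩
        rw [heq] at this
        simp [Finset.sum_const, mul_comm] at this
      have hset := Finset.eq_of_subset_of_card_le
        (fun j hj => by
          simp only [Finset.mem_filter] at hj ⊢; exact ⟨hj.1, hj.2.1⟩)
        (le_of_eq (hall f).symm)
      rw [← hset] at hj
      simp only [Finset.mem_filter] at hj
      exact hj.2.2
    · intro h
      have : ∀ f : Fin p,
          (Finset.univ.filter (fun j : Fin n => Dr u j = 1 ∧ Df f j = 1)) =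
            (Finset.univ.filter (fun j : Fin n => Dr u j = 1)) := by
        intro f
        ext j
        simp only [Finset.mem_filter, Finset.mem_univ, true_and]
        constructor
        · exact fun hj => hj.1
        · intro hj
          exact ⟨hj, h f j (by simp [Finset.mem_filter, hj])⟩
      simp [this, Finset.sum_const, mul_comm]
  · intro Df' hDf'
    have hDf'01 : ∀ f j, Df' f j = 0 ∨ Df' f j = 1 := by
      intro f j; rw [hDf' f j]; split <;> simp
    have hDf'i : ∀ f, Df' f i = 1 := by
      intro f; rw [hDf' f i]; simp
    have hfull : ∀ f : Fin p,
        (Finset.univ.filter (fun j : Fin n => Dr u j = 1 ∧ Df' f j = 1)) =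
          (Finset.univ.filter (fun j : Fin n => Dr u j = 1)) := by
      intro f
      ext j
      simp only [Finset.mem_filter, Finset.mem_univ, true_and]
      constructor
      · exact fun hj => hj.1
      · intro hj
        refine ⟨hj, ?_⟩
        rw [hDf' f j]
        simp [hj]
    have hmax : (Matrix.fromBlocks 0 (Matrix.fromRows Dr Df') (Matrix.fromRows Dr Df')ᵀ 0 ^ 3)
        (Sum.inl (Sum.inl u)) (Sum.inr i) =
        (Matrix.fromBlocks 0 Dr Drᵀ 0 ^ 3) (Sum.inl u) (Sum.inr i) +
          p * (Finset.univ.filter (fun j : Fin n => Dr u j = 1)).card := by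
      rw [main_entry' Dr Df' hDr hDf'01 u i hDf'i]
      simp [hfull, Finset.sum_const, mul_comm]
    refine ⟨hmax, ?_⟩
    intro Df2 hDf2 hDf2i
    rw [main_entry' Dr Df2 hDr hDf2 u i hDf2i, hmax]
    exact Nat.add_le_add_left (hbound Df2) _
end

section
/- Let D be an m×n matrix with entries in {0,1} (over ℕ), let u be a user and i an item, and write N_u = {j : D_{u,j}=1} and N_i = {u' : D_{u',i}=1}. Suppose embeddings (e_{u'})_{u'} and (e_{j})_{j} in ℝ^d satisfy ⟨e_{u'}, e_{j}⟩ = C_L whenever D_{u',j}=1 and ⟨e_{u'}, e_{j}⟩ = C_S whenever D_{u',j}=0, for real constants C_L and C_S. Then Σ_{j∈N_u} Σ_{u'∈N_i} ⟨e_{u'}, e_{j}⟩ = (A³)_{u,i}·C_L + (|N_u|·|N_i| − (A³)_{u,i})·C_S, where (A³)_{u,i} is the three-order path number between u and i. -/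
open Matrix RealInnerProductSpace

theorem stmt_11 {m n d : ℕ} (D : Matrix (Fin m) (Fin n) ℕ)
    (hD : ∀ u' j, D u' j = 0 ∨ D u' j = 1)
    (u : Fin m) (i : Fin n)
    (Nu : Finset (Fin n)) (hNu : Nu = Finset.univ.filter (fun j : Fin n => D u j = 1))
    (Ni : Finset (Fin m)) (hNi : Ni = Finset.univ.filter (fun u' : Fin m => D u' i = 1))
    (eU : Fin m → EuclideanSpace ℝ (Fin d)) (eI : Fin n → EuclideanSpace ℝ (Fin d))
    (CL CS : ℝ)
    (hCL : ∀ u' j, D u' j = 1 → ⟪eU u', eI j⟫ = CL)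
    (hCS : ∀ u' j, D u' j = 0 → ⟪eU u', eI j⟫ = CS)
    (A : Matrix (Fin m ⊕ Fin n) (Fin m ⊕ Fin n) ℕ)
    (hA : A = Matrix.fromBlocks 0 D Dᵀ 0) :
    ∑ j ∈ Nu, ∑ u' ∈ Ni, ⟪eU u', eI j⟫ =
      ((A ^ 3) (Sum.inl u) (Sum.inr i) : ℝ) * CL +
        ((Nu.card : ℝ) * (Ni.card : ℝ) - ((A ^ 3) (Sum.inl u) (Sum.inr i) : ℝ)) * CS := by
  subst hA
  -- Compute the (u,i) entry of A^3
  have hA3 : ((Matrix.fromBlocks 0 D Dᵀ 0 : Matrix (Fin m ⊕ Fin n) (Fin m ⊕ Fin n) ℕ) ^ 3)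
      (Sum.inl u) (Sum.inr i) = ((D * Dᵀ * D)) u i := by
    have h2 : (Matrix.fromBlocks 0 D Dᵀ 0 : Matrix (Fin m ⊕ Fin n) (Fin m ⊕ Fin n) ℕ) ^ 3
        = Matrix.fromBlocks (D * Dᵀ) 0 0 (Dᵀ * D) * Matrix.fromBlocks 0 D Dᵀ 0 := by
      rw [pow_succ, pow_two, Matrix.fromBlocks_multiply]
      simp
    rw [h2, Matrix.fromBlocks_multiply]
    simp [Matrix.fromBlocks_apply₁₂]
  have hentry : ((D * Dᵀ * D)) u i = ∑ j ∈ Nu, ∑ u' ∈ Ni, D u' j := by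
    have : (D * Dᵀ * D) u i = ∑ u' : Fin m, ∑ j : Fin n, D u j * D u' j * D u' i := by
      simp [Matrix.mul_apply, Finset.sum_mul]
    rw [this, Finset.sum_comm]
    rw [hNu, hNi]
    rw [Finset.sum_filter]
    refine Finset.sum_congr rfl fun j _ => ?_
    rcases hD u j with h | h
    · simp [h]
    · simp only [h, if_pos rfl, one_mul]
      rw [Finset.sum_filter]
      refine Finset.sum_congr rfl fun u' _ => ?_
      rcases hD u' i with h' | h' <;> simp [h']
  rw [hA3, hentry]
  -- Now reduce to a pointwise identity
  push_cast
  have key : ∀ j ∈ Nu, ∀ u' ∈ Ni,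
      ⟪eU u', eI j⟫ = (D u' j : ℝ) * CL + (1 - (D u' j : ℝ)) * CS := by
    intro j _ u' _
    rcases hD u' j with h | h
    · rw [hCS u' j h, h]; push_cast; ring
    · rw [hCL u' j h, h]; push_cast; ring
  calc ∑ j ∈ Nu, ∑ u' ∈ Ni, ⟪eU u', eI j⟫
      = ∑ j ∈ Nu, ∑ u' ∈ Ni, ((D u' j : ℝ) * CL + (1 - (D u' j : ℝ)) * CS) := by
        exact Finset.sum_congr rfl fun j hj => Finset.sum_congr rfl fun u' hu' => key j hj u' hu'
    _ = _ := by
        simp only [Finset.sum_add_distrib, ← Finset.sum_mul, Finset.sum_sub_distrib,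
          Finset.sum_const, nsmul_eq_mul, mul_one]
end
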